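/- arXiv:0911.2942 — 4 statements merged into one kernel-verified Lean document; each statement's English description precedes it below -/
import Mathlib

section
/- If I and J are uniquely valid subsets of {1,…,m}, then I ∪ J is uniquely valid. Consequently, if I and J are both uniquely valid subsets of maximum cardinality among the uniquely valid subsets of {1,…,m}, then I = J; i.e., there exists exactly one maximal uniquely valid subset of {1,…,m}. -/
open Matrix

noncomputable def euclNorm {m : ℕ} (x : Fin m → ℝ) : ℝ := Real.sqrt (∑ i, x i ^ 2)

theorem Finset.eq_of_card_maximal_of_union_mem {ι : Type*} [DecidableEq ι]
    {P : Finset ι → Prop} (hP : ∀ I J, P I → P J → P (I ∪ J)) {I J : Finset ι}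
    (hI : P I) (hJ : P J) (hImax : ∀ K, P K → K.card ≤ I.card)
    (hJmax : ∀ K, P K → K.card ≤ J.card) : I = J :=
  have hIJ := hP I J hI hJ
  (eq_of_subset_of_card_le subset_union_left (hImax _ hIJ)).trans
    (eq_of_subset_of_card_le subset_union_right (hJmax _ hIJ)).symm

theorem pairwise_conditions_of_subset {ι κ : Type*} {P : ι → κ → Prop}
    {Q : ι → ι → κ → κ → Prop} {α : ι → κ} {I K : Finset ι} (hIK : I ⊆ K)
    (h : Set.InjOn α K ∧ ∀ i ∈ K, P i (α i) ∧ ∀ j ∈ K, Q i j (α i) (α j)) :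
    Set.InjOn α I ∧ ∀ i ∈ I, P i (α i) ∧ ∀ j ∈ I, Q i j (α i) (α j) :=
  ⟨h.1.mono (Finset.coe_subset.mpr hIK), fun i hi => ⟨(h.2 i (hIK hi)).1,
    fun j hj => (h.2 i (hIK hi)).2 j (hIK hj)⟩⟩

theorem eqOn_union_of_forall_valid {ι κ : Type*} [DecidableEq ι]
    {Valid : (ι → κ) → Finset ι → Prop} (hValid : ∀ α I K, I ⊆ K → Valid α K → Valid α I)
    {π : ι → κ} {I J : Finset ι} (hI : ∀ α, Valid α I → ∀ i ∈ I, α i = π i)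
    (hJ : ∀ α, Valid α J → ∀ i ∈ J, α i = π i) :
    ∀ α, Valid α (I ∪ J) → ∀ i ∈ I ∪ J, α i = π i := by
  intro α hα i hi
  rcases Finset.mem_union.mp hi with hiI | hiJ
  · exact hI α (hValid α I _ Finset.subset_union_left hα) i hiI
  · exact hJ α (hValid α J _ Finset.subset_union_right hα) i hiJ

theorem unique_maximal_uniquely_valid_general {n m : ℕ} (x y : Fin m → (Fin n → ℝ))
    (π : Equiv.Perm (Fin m))
    (Valid : (Fin m → Fin m) → Finset (Fin m) → Prop)
    (hValid : Valid = fun α (I : Finset (Fin m)) => Set.InjOn α ↑I ∧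
      ∀ i ∈ I, euclNorm (x i) = euclNorm (y (α i)) ∧
        ∀ j ∈ I, euclNorm (x i - x j) = euclNorm (y (α i) - y (α j)))
    (UniquelyValid : Finset (Fin m) → Prop)
    (hUV : UniquelyValid = fun I => ∀ α, Valid α I → ∀ i ∈ I, α i = π i) :
    (∀ I J, UniquelyValid I → UniquelyValid J → UniquelyValid (I ∪ J)) ∧
    (∀ I J, UniquelyValid I → UniquelyValid J →
      (∀ K, UniquelyValid K → K.card ≤ I.card) →
      (∀ K, UniquelyValid K → K.card ≤ J.card) → I = J) := by
  have hRestrict : ∀ α I K, I ⊆ K → Valid α K → Valid α I := by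
    subst hValid
    exact fun _ _ _ hIK => pairwise_conditions_of_subset hIK
      (P := fun i k => euclNorm (x i) = euclNorm (y k))
      (Q := fun i j k l => euclNorm (x i - x j) = euclNorm (y k - y l))
  have hUnion : ∀ I J, UniquelyValid I → UniquelyValid J → UniquelyValid (I ∪ J) := by
    subst hUV
    exact fun _ _ => eqOn_union_of_forall_valid hRestrict
  exact ⟨hUnion, fun _ _ => Finset.eq_of_card_maximal_of_union_mem hUnion⟩

/-- the union of two uniquely valid subsets is uniquely valid, hence there is
exactly one maximal uniquely valid subset of {1,…,m}. -/
theorem unique_maximal_uniquely_valid {n m : ℕ} (x y : Fin m → (Fin n → ℝ))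
    (M : Matrix (Fin n) (Fin n) ℝ) (hM : Mᵀ * M = 1)
    (π : Equiv.Perm (Fin m)) (hy : ∀ i, y (π i) = M.mulVec (x i))
    (Valid : (Fin m → Fin m) → Finset (Fin m) → Prop)
    (hValid : Valid = fun α (I : Finset (Fin m)) => Set.InjOn α ↑I ∧
      ∀ i ∈ I, euclNorm (x i) = euclNorm (y (α i)) ∧
        ∀ j ∈ I, euclNorm (x i - x j) = euclNorm (y (α i) - y (α j)))
    (UniquelyValid : Finset (Fin m) → Prop)
    (hUV : UniquelyValid = fun I => ∀ α, Valid α I → ∀ i ∈ I, α i = π i) :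
    (∀ I J, UniquelyValid I → UniquelyValid J → UniquelyValid (I ∪ J)) ∧
    (∀ I J, UniquelyValid I → UniquelyValid J →
      (∀ K, UniquelyValid K → K.card ≤ I.card) →
      (∀ K, UniquelyValid K → K.card ≤ J.card) → I = J) :=
  unique_maximal_uniquely_valid_general x y π Valid hValid UniquelyValid hUV
end

section
/- 𝕄(X,Y) = { M_T U_k U_kᵀ + V_{n−k} P U_{n−k}ᵀ : P ∈ 𝕆_{n−k} }; that is, an n×n orthogonal matrix M satisfies M X = Y if and only if M = M_T U_k U_kᵀ + V_{n−k} P U_{n−k}ᵀ for some (n−k)×(n−k) orthogonal matrix P. -/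
open Matrix

/-- Column space of a matrix: the span of its columns. -/
def colSpace {n q : ℕ} (X : Matrix (Fin n) (Fin q) ℝ) : Submodule ℝ (Fin n → ℝ) :=
  Submodule.span ℝ (Set.range Xᵀ)

/-- Orthogonal complement (as a set) of a subspace of ℝ^n, w.r.t. the dot product. -/
def perpSet {n : ℕ} (W : Submodule ℝ (Fin n → ℝ)) : Set (Fin n → ℝ) :=
  {z | ∀ w ∈ W, z ⬝ᵥ w = 0}

/-!
If `M` is orthogonal and `M X = M_T X`, then `M` agrees with `M_T` on `Col X = Col U_k`, and, since
`M` preserves orthogonality, it maps `Col(X)ᗮ` into `Col(M_T X)ᗮ = Col V_{n−k}`; so `M U_{n−k} = V P`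
with `P = V_{n−k}ᵀ M U_{n−k}` orthogonal, and `M = M (U_k U_kᵀ + U_{n−k} U_{n−k}ᵀ)` has the stated
form. Conversely `M_T U_k` and `V_{n−k} P` have orthonormal, mutually orthogonal columns, which makes
`M_T U_k U_kᵀ + V_{n−k} P U_{n−k}ᵀ` orthogonal, and it sends `X` to `M_T X` because `U_{n−k}ᵀ X = 0`.
-/

namespace Matrix

variable {R m a b c : Type*}

theorem transpose_mul_self_mul_eq_one [CommRing R] [Fintype m] [Fintype a] [DecidableEq a]
    [DecidableEq b] {A : Matrix m a R} {B : Matrix a b R}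
    (hA : Aᵀ * A = 1) (hB : Bᵀ * B = 1) : (A * B)ᵀ * (A * B) = 1 := by
  rw [transpose_mul, Matrix.mul_assoc, ← Matrix.mul_assoc Aᵀ, hA, Matrix.one_mul, hB]

theorem card_le_of_transpose_mul_self_eq_one [Field R] [Fintype m] [Fintype a] [DecidableEq a]
    {A : Matrix m a R} (hA : Aᵀ * A = 1) : Fintype.card a ≤ Fintype.card m :=
  calc Fintype.card a = (Aᵀ * A).rank := by rw [hA, rank_one]
    _ ≤ A.rank := rank_mul_le_right _ _
    _ ≤ Fintype.card m := rank_le_card_height A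

theorem mul_transpose_add_mul_transpose_eq_one [Field R] [Fintype m] [Fintype a] [Fintype b]
    [DecidableEq m] [DecidableEq a] [DecidableEq b] {A : Matrix m a R} {B : Matrix m b R}
    (hA : Aᵀ * A = 1) (hB : Bᵀ * B = 1) (hBA : Bᵀ * A = 0)
    (hcard : Fintype.card a + Fintype.card b = Fintype.card m) :
    A * Aᵀ + B * Bᵀ = 1 := by
  have hAB : Aᵀ * B = 0 := by simpa using congrArg transpose hBA
  have hW : (fromCols A B)ᵀ * fromCols A B = 1 := by
    rw [transpose_fromCols, fromRows_mul_fromCols, hA, hB, hAB, hBA, fromBlocks_one]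
  have hW' := (mul_eq_one_comm_of_card_eq (a ⊕ b) m R (by rw [Fintype.card_sum, hcard])).mp hW
  rwa [transpose_fromCols, fromCols_mul_fromRows] at hW'

theorem transpose_mul_self_of_orthonormal [CommRing R] [Fintype m] [Fintype a] [Fintype b]
    [DecidableEq a] [DecidableEq b]
    {A : Matrix m a R} {B : Matrix m b R} {C : Matrix c a R} {D : Matrix c b R}
    (hA : Aᵀ * A = 1) (hB : Bᵀ * B = 1) (hBA : Bᵀ * A = 0) :
    (A * Cᵀ + B * Dᵀ)ᵀ * (A * Cᵀ + B * Dᵀ) = C * Cᵀ + D * Dᵀ := by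
  have hAB : Aᵀ * B = 0 := by simpa using congrArg transpose hBA
  simp only [transpose_add, transpose_mul, transpose_transpose, Matrix.add_mul, Matrix.mul_add,
    Matrix.mul_assoc, ← Matrix.mul_assoc Aᵀ, ← Matrix.mul_assoc Bᵀ, hA, hB, hAB, hBA]
  simp

end Matrix

section ColSpace

variable {n p q : ℕ}

theorem colSpace_eq_range (X : Matrix (Fin n) (Fin q) ℝ) :
    colSpace X = LinearMap.range X.mulVecLin :=
  (range_mulVecLin X).symm

theorem colSpace_mul (M : Matrix (Fin n) (Fin n) ℝ) (X : Matrix (Fin n) (Fin q) ℝ) :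
    colSpace (M * X) = (colSpace X).map M.mulVecLin := by
  rw [colSpace_eq_range, colSpace_eq_range, mulVecLin_mul, LinearMap.range_comp]

theorem exists_eq_mul_of_colSpace_le {A : Matrix (Fin n) (Fin p) ℝ}
    {B : Matrix (Fin n) (Fin q) ℝ} (h : colSpace B ≤ colSpace A) :
    ∃ C : Matrix (Fin p) (Fin q) ℝ, B = A * C := by
  have hcol (j : Fin q) : Bᵀ j ∈ LinearMap.range A.mulVecLin :=
    colSpace_eq_range A ▸ h (Submodule.subset_span ⟨j, rfl⟩)
  choose v hv using hcol
  refine ⟨(of v)ᵀ, ?_⟩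
  ext i j
  simpa [mul_apply, mulVec, dotProduct] using (congrFun (hv j) i).symm

theorem mul_transpose_mul_of_colSpace_le {A : Matrix (Fin n) (Fin p) ℝ}
    {B : Matrix (Fin n) (Fin q) ℝ} (hA : Aᵀ * A = 1) (h : colSpace B ≤ colSpace A) :
    A * (Aᵀ * B) = B := by
  obtain ⟨C, rfl⟩ := exists_eq_mul_of_colSpace_le h
  rw [← Matrix.mul_assoc Aᵀ, hA, Matrix.one_mul]

theorem mul_eq_mul_of_colSpace_le {m : ℕ} {M N : Matrix (Fin m) (Fin n) ℝ}
    {X : Matrix (Fin n) (Fin q) ℝ} {A : Matrix (Fin n) (Fin p) ℝ} (hMX : M * X = N * X)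
    (h : colSpace A ≤ colSpace X) : M * A = N * A := by
  obtain ⟨C, rfl⟩ := exists_eq_mul_of_colSpace_le h
  rw [← Matrix.mul_assoc, hMX, Matrix.mul_assoc]

theorem mem_perpSet_colSpace_iff {X : Matrix (Fin n) (Fin q) ℝ} {z : Fin n → ℝ} :
    z ∈ perpSet (colSpace X) ↔ z ᵥ* X = 0 := by
  simp [perpSet, colSpace_eq_range, dotProduct_mulVec, dotProduct_eq_zero_iff]

theorem colSpace_subset_perpSet_iff {A : Matrix (Fin n) (Fin p) ℝ}
    {B : Matrix (Fin n) (Fin q) ℝ} :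
    (colSpace A : Set (Fin n → ℝ)) ⊆ perpSet (colSpace B) ↔ Aᵀ * B = 0 := by
  simp only [Set.subset_def, SetLike.mem_coe, mem_perpSet_colSpace_iff]
  simp [colSpace_eq_range, ← vecMul_transpose, vecMul_vecMul, ext_iff_vecMul]

theorem colSpace_mul_subset_perpSet {M : Matrix (Fin n) (Fin n) ℝ}
    {B : Matrix (Fin n) (Fin p) ℝ} {X : Matrix (Fin n) (Fin q) ℝ} (hM : Mᵀ * M = 1)
    (hBX : Bᵀ * X = 0) : (colSpace (M * B) : Set (Fin n → ℝ)) ⊆ perpSet (colSpace (M * X)) := by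
  rw [colSpace_subset_perpSet_iff, transpose_mul, Matrix.mul_assoc, ← Matrix.mul_assoc Mᵀ, hM,
    Matrix.one_mul, hBX]

end ColSpace

theorem orthogonal_solutions_characterization_general {n q k : ℕ}
    (X : Matrix (Fin n) (Fin q) ℝ) (MT : Matrix (Fin n) (Fin n) ℝ) (hMT : MTᵀ * MT = 1)
    (Uk : Matrix (Fin n) (Fin k) ℝ) (hUk : Ukᵀ * Uk = 1)
    (hUkspan : colSpace Uk = colSpace X)
    (U2 : Matrix (Fin n) (Fin (n - k)) ℝ) (hU2 : U2ᵀ * U2 = 1)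
    (hU2span : (colSpace U2 : Set (Fin n → ℝ)) = perpSet (colSpace X))
    (V2 : Matrix (Fin n) (Fin (n - k)) ℝ) (hV2 : V2ᵀ * V2 = 1)
    (hV2span : (colSpace V2 : Set (Fin n → ℝ)) = perpSet (colSpace (MT * X))) :
    ∀ M : Matrix (Fin n) (Fin n) ℝ,
      (Mᵀ * M = 1 ∧ M * X = MT * X) ↔
        ∃ P : Matrix (Fin (n - k)) (Fin (n - k)) ℝ,
          Pᵀ * P = 1 ∧ M = MT * Uk * Ukᵀ + V2 * P * U2ᵀ := by
  have hkn : k ≤ n := by simpa using card_le_of_transpose_mul_self_eq_one hUk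
  have hU2X : U2ᵀ * X = 0 := colSpace_subset_perpSet_iff.mp hU2span.subset
  have hV2MTUk : V2ᵀ * (MT * Uk) = 0 := colSpace_subset_perpSet_iff.mp <| by
    rw [colSpace_mul, hUkspan, ← colSpace_mul, hV2span]
  have hresolution : Uk * Ukᵀ + U2 * U2ᵀ = 1 :=
    mul_transpose_add_mul_transpose_eq_one hUk hU2
      (colSpace_subset_perpSet_iff.mp (hUkspan ▸ hU2span.subset)) (by simp [hkn])
  intro M
  constructor
  · rintro ⟨hM, hMX⟩
    have hMU2 : V2 * (V2ᵀ * (M * U2)) = M * U2 := by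
      refine mul_transpose_mul_of_colSpace_le hV2 ?_
      rw [← SetLike.coe_subset_coe, hV2span, ← hMX]
      exact colSpace_mul_subset_perpSet hM hU2X
    refine ⟨V2ᵀ * (M * U2), ?_, ?_⟩
    · rw [transpose_mul, transpose_transpose, Matrix.mul_assoc, hMU2]
      exact transpose_mul_self_mul_eq_one hM hU2
    · calc M = M * (Uk * Ukᵀ + U2 * U2ᵀ) := by rw [hresolution, Matrix.mul_one]
        _ = MT * Uk * Ukᵀ + V2 * (V2ᵀ * (M * U2)) * U2ᵀ := by
          rw [Matrix.mul_add, ← Matrix.mul_assoc, ← Matrix.mul_assoc,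
            mul_eq_mul_of_colSpace_le hMX hUkspan.le, hMU2]
  · rintro ⟨P, hP, rfl⟩
    refine ⟨?_, ?_⟩
    · rw [transpose_mul_self_of_orthonormal (transpose_mul_self_mul_eq_one hMT hUk)
        (transpose_mul_self_mul_eq_one hV2 hP)
        (by rw [transpose_mul, Matrix.mul_assoc, hV2MTUk, Matrix.mul_zero]), hresolution]
    · rw [Matrix.add_mul, Matrix.mul_assoc, Matrix.mul_assoc,
        mul_transpose_mul_of_colSpace_le hUk hUkspan.ge, Matrix.mul_assoc, hU2X, Matrix.mul_zero,
        add_zero]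

/-- 𝕄(X,Y) = { M_T U_k U_kᵀ + V_{n−k} P U_{n−k}ᵀ : P ∈ 𝕆_{n−k} }, where Y = M_T X. -/
theorem orthogonal_solutions_characterization {n q k : ℕ}
    (X : Matrix (Fin n) (Fin q) ℝ) (MT : Matrix (Fin n) (Fin n) ℝ) (hMT : MTᵀ * MT = 1)
    (hk : Module.finrank ℝ (colSpace X) = k)
    (Uk : Matrix (Fin n) (Fin k) ℝ) (hUk : Ukᵀ * Uk = 1)
    (hUkspan : colSpace Uk = colSpace X)
    (U2 : Matrix (Fin n) (Fin (n - k)) ℝ) (hU2 : U2ᵀ * U2 = 1)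
    (hU2span : (colSpace U2 : Set (Fin n → ℝ)) = perpSet (colSpace X))
    (V2 : Matrix (Fin n) (Fin (n - k)) ℝ) (hV2 : V2ᵀ * V2 = 1)
    (hV2span : (colSpace V2 : Set (Fin n → ℝ)) = perpSet (colSpace (MT * X))) :
    ∀ M : Matrix (Fin n) (Fin n) ℝ,
      (Mᵀ * M = 1 ∧ M * X = MT * X) ↔
        ∃ P : Matrix (Fin (n - k)) (Fin (n - k)) ℝ,
          Pᵀ * P = 1 ∧ M = MT * Uk * Ukᵀ + V2 * P * U2ᵀ :=
  orthogonal_solutions_characterization_general X MT hMT Uk hUk hUkspan U2 hU2 hU2span V2 hV2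
    hV2span
end

section
/- Let x ∈ ℝⁿ be nonzero, let M_T and M̂ be n×n orthogonal matrices, set x̂ = M̂ᵀ M_T x, and let ε ≥ 0. Then 1 − ⟨x̂, x⟩/(‖x̂‖·‖x‖) ≤ ε if and only if ‖x̂ − x‖ ≤ ‖x‖·√(2ε); i.e., an ε-cos-privacy breach occurs if and only if a √(2ε)-privacy breach occurs. -/
/-!
Orthogonal matrices preserve the Euclidean norm, so `‖x̂‖ = ‖x‖`. For vectors of equal norm,
`‖x̂ - x‖² = 2‖x‖² (1 - cos ∠(x̂, x))`, so squaring the privacy-breach inequality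
`‖x̂ - x‖ ≤ ‖x‖ √(2ε)` turns it into the cos-privacy-breach inequality `1 - cos ∠(x̂, x) ≤ ε`.
-/

open Matrix
open scoped InnerProductSpace

section InnerProductSpace

variable {E : Type*} [NormedAddCommGroup E] [InnerProductSpace ℝ E]

theorem norm_sub_sq_eq_mul_one_sub_cos {x y : E} (hxy : ‖y‖ = ‖x‖) (hx : x ≠ 0) :
    ‖y - x‖ ^ 2 = 2 * ‖x‖ ^ 2 * (1 - ⟪y, x⟫_ℝ / (‖y‖ * ‖x‖)) := by
  have hx' : ‖x‖ ≠ 0 := norm_ne_zero_iff.mpr hx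
  rw [norm_sub_sq_real, hxy]
  field_simp
  ring

theorem one_sub_cos_le_iff_norm_sub_le {x y : E} (hxy : ‖y‖ = ‖x‖) (hx : x ≠ 0) {ε : ℝ}
    (hε : 0 ≤ ε) :
    1 - ⟪y, x⟫_ℝ / (‖y‖ * ‖x‖) ≤ ε ↔ ‖y - x‖ ≤ ‖x‖ * √(2 * ε) := by
  have hx2 : 0 < ‖x‖ ^ 2 := by positivity
  rw [← pow_le_pow_iff_left₀ (norm_nonneg _) (by positivity) two_ne_zero, mul_pow,
    Real.sq_sqrt (by positivity), norm_sub_sq_eq_mul_one_sub_cos hxy hx,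
    show ‖x‖ ^ 2 * (2 * ε) = 2 * ‖x‖ ^ 2 * ε by ring, mul_le_mul_iff_right₀ (by positivity)]

end InnerProductSpace

section EuclNorm

variable {m : ℕ}

theorem euclNorm_eq_norm_toLp (x : Fin m → ℝ) : euclNorm x = ‖WithLp.toLp 2 x‖ := by
  simp [euclNorm, EuclideanSpace.norm_eq]

theorem dotProduct_eq_inner_toLp (x y : Fin m → ℝ) :
    x ⬝ᵥ y = ⟪WithLp.toLp 2 x, WithLp.toLp 2 y⟫_ℝ := by
  simp [EuclideanSpace.inner_eq_star_dotProduct, dotProduct_comm]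

theorem euclNorm_eq_sqrt_dotProduct (x : Fin m → ℝ) : euclNorm x = √(x ⬝ᵥ x) := by
  simp [euclNorm, dotProduct, sq]

theorem euclNorm_mulVec_of_transpose_mul_self {M : Matrix (Fin m) (Fin m) ℝ} (hM : Mᵀ * M = 1)
    (v : Fin m → ℝ) : euclNorm (M *ᵥ v) = euclNorm v := by
  rw [euclNorm_eq_sqrt_dotProduct, euclNorm_eq_sqrt_dotProduct, dotProduct_mulVec,
    ← vecMul_transpose, vecMul_vecMul, hM, vecMul_one]

end EuclNorm

/-- an ε-cos-privacy breach occurs iff a √(2ε)-privacy breach occurs. -/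
theorem cos_breach_iff {n : ℕ} (x : Fin n → ℝ) (hx : x ≠ 0)
    (MT Mhat : Matrix (Fin n) (Fin n) ℝ) (hMT : MTᵀ * MT = 1) (hMhat : Mhatᵀ * Mhat = 1)
    (ε : ℝ) (hε : 0 ≤ ε) :
    (1 - (Mhatᵀ.mulVec (MT.mulVec x)) ⬝ᵥ x /
        (euclNorm (Mhatᵀ.mulVec (MT.mulVec x)) * euclNorm x) ≤ ε) ↔
      euclNorm (Mhatᵀ.mulVec (MT.mulVec x) - x) ≤ euclNorm x * Real.sqrt (2 * ε) := by
  have hMhat' : Mhatᵀᵀ * Mhatᵀ = 1 := by rw [transpose_transpose, mul_eq_one_comm, hMhat]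
  have hnorm : euclNorm (Mhatᵀ *ᵥ (MT *ᵥ x)) = euclNorm x := by
    rw [euclNorm_mulVec_of_transpose_mul_self hMhat', euclNorm_mulVec_of_transpose_mul_self hMT]
  have hx' : WithLp.toLp 2 x ≠ 0 := by simpa using hx
  simp only [euclNorm_eq_norm_toLp, dotProduct_eq_inner_toLp, WithLp.toLp_sub] at hnorm ⊢
  exact one_sub_cos_le_iff_norm_sub_le hnorm hx' hε
end

section
/- If the n×q real matrix X has rank n−1 (equivalently k = dim Col(X) = n−1), then 𝕄(X, M_T X) contains exactly two elements, one of which is M_T. -/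
/-!
Replacing `M` by `M_Tᵀ * M` reduces the claim to the orthogonal `N` with `N * X = X`. Every row
of `N - 1` then lies in the left kernel of `X`, which is spanned by a unit vector `u` because
`rank X = n - 1`; hence `N = 1 + a uᵀ`, and orthogonality forces `a = 0` or `a = -2 u`, i.e. `N` is
the identity or the Householder reflection in the hyperplane `u⊥ = Col(X)`.
-/

open Matrix

namespace Matrix

variable {l m n : Type*}

section Householder

variable {R : Type*} [CommRing R] [DecidableEq m]

def householder (u : m → R) : Matrix m m R :=
  1 - (2 : R) • vecMulVec u u

theorem householder_eq_one_add_vecMulVec (u : m → R) :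
    householder u = 1 + vecMulVec ((-2 : R) • u) u := by
  rw [householder, smul_vecMulVec, neg_smul, sub_eq_add_neg]

theorem transpose_householder (u : m → R) : (householder u)ᵀ = householder u := by
  rw [householder, transpose_sub, transpose_one, transpose_smul, transpose_vecMulVec]

variable [Fintype m]

theorem householder_mul_self {u : m → R} (hu : u ⬝ᵥ u = 1) :
    householder u * householder u = 1 := by
  simp only [householder, sub_mul, mul_sub, one_mul, mul_one, smul_mul_smul_comm,
    vecMulVec_mul_vecMulVec, hu, one_smul]
  module

theorem householder_mul_of_vecMul_eq_zero {u : m → R} {X : Matrix m n R} (h : u ᵥ* X = 0) :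
    householder u * X = X := by
  rw [householder, Matrix.sub_mul, Matrix.one_mul, Matrix.smul_mul, vecMulVec_mul, h]
  ext i j
  simp [vecMulVec_apply]

theorem householder_mulVec_self {u : m → R} (hu : u ⬝ᵥ u = 1) : householder u *ᵥ u = -u := by
  rw [householder, sub_mulVec, one_mulVec, smul_mulVec, vecMulVec_mulVec, hu, MulOpposite.op_one,
    one_smul]
  module

theorem householder_ne_one [NoZeroDivisors R] [NeZero (2 : R)] {u : m → R} (hu : u ⬝ᵥ u = 1) :
    householder u ≠ 1 := by
  intro h
  have hu0 : (2 : R) • u = 0 := by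
    have := householder_mulVec_self hu
    rwa [h, one_mulVec, eq_neg_iff_add_eq_zero, ← two_smul R] at this
  rw [smul_eq_zero_iff_right two_ne_zero] at hu0
  rw [hu0, zero_dotProduct] at hu
  exact two_ne_zero (α := R) (by rw [← mul_one (2 : R), ← hu, mul_zero])

end Householder

variable [Fintype m]

theorem one_add_vecMulVec_mulVec {R : Type*} [CommRing R] [DecidableEq m] (a u w : m → R) :
    (1 + vecMulVec a u) *ᵥ w = w + (u ⬝ᵥ w) • a := by
  rw [add_mulVec, one_mulVec, vecMulVec_mulVec, op_smul_eq_smul]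

theorem eq_zero_or_eq_neg_two_smul_of_transpose_mul_self_eq_one {R : Type*} [CommRing R]
    [NoZeroDivisors R] [DecidableEq m] {a u : m → R} (hu : u ⬝ᵥ u = 1)
    (h : (1 + vecMulVec a u)ᵀ * (1 + vecMulVec a u) = 1) : a = 0 ∨ a = (-2 : R) • u := by
  -- `Nᵀ N u = u` gives `a = μ u`; substituting back into `μ` yields `μ² + 2μ = 0`.
  set μ := -(a ⬝ᵥ u + a ⬝ᵥ a) with hμ_def
  have ha : a = μ • u := by
    have hfix := congrArg (· *ᵥ u) h
    simp only [← mulVec_mulVec, one_mulVec, transpose_add, transpose_one, transpose_vecMulVec,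
      one_add_vecMulVec_mulVec, hu, one_smul, dotProduct_add] at hfix
    linear_combination (norm := module) hfix
  have hμ : μ * (μ + 2) = 0 := by
    have hau : a ⬝ᵥ u = μ := by rw [ha, smul_dotProduct, hu, smul_eq_mul, mul_one]
    have haa : a ⬝ᵥ a = μ * μ := by
      rw [ha, smul_dotProduct, dotProduct_smul, hu, smul_eq_mul, smul_eq_mul, mul_one]
    linear_combination hμ_def - hau - haa
  rcases mul_eq_zero.mp hμ with hμ | hμ
  · left; rw [ha, hμ, zero_smul]
  · right; rw [ha, eq_neg_of_add_eq_zero_left hμ]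

theorem exists_eq_vecMulVec_of_mul_eq_zero {R : Type*} [CommRing R] {A : Matrix l m R}
    {X : Matrix m n R} {u : m → R} (hu : ∀ w, w ᵥ* X = 0 → ∃ c : R, w = c • u)
    (hA : A * X = 0) : ∃ a : l → R, A = vecMulVec a u := by
  choose a ha using fun i => hu (A i) (by rw [← mul_apply_eq_vecMul, hA]; rfl)
  exact ⟨a, by ext i j; rw [ha i, vecMulVec_apply, Pi.smul_apply, smul_eq_mul]⟩

theorem setOf_orthogonal_mul_eq_self_eq {K : Type*} [Field K] [DecidableEq m]
    {X : Matrix m n K} {u : m → K} (hu : u ⬝ᵥ u = 1)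
    (hker : ∀ w, w ᵥ* X = 0 ↔ ∃ c : K, w = c • u) :
    {N : Matrix m m K | Nᵀ * N = 1 ∧ N * X = X} = {1, householder u} := by
  ext N
  simp only [Set.mem_ofPred_eq, Set.mem_insert_iff, Set.mem_singleton_iff]
  constructor
  · rintro ⟨hN, hNX⟩
    obtain ⟨a, ha⟩ := exists_eq_vecMulVec_of_mul_eq_zero (fun w => (hker w).mp)
      (show (N - 1) * X = 0 by rw [Matrix.sub_mul, hNX, Matrix.one_mul, sub_self])
    rw [sub_eq_iff_eq_add'] at ha
    subst ha
    rcases eq_zero_or_eq_neg_two_smul_of_transpose_mul_self_eq_one hu hN with rfl | rfl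
    · left; rw [zero_vecMulVec, add_zero]
    · right; rw [householder_eq_one_add_vecMulVec]
  · rintro (rfl | rfl)
    · exact ⟨by rw [transpose_one, one_mul], Matrix.one_mul X⟩
    · exact ⟨by rw [transpose_householder, householder_mul_self hu],
        householder_mul_of_vecMul_eq_zero ((hker u).mpr ⟨1, (one_smul K u).symm⟩)⟩

theorem setOf_orthogonal_mul_eq_mul_eq_image {R : Type*} [CommRing R] [DecidableEq m]
    {Q : Matrix m m R} (hQ : Qᵀ * Q = 1) (X : Matrix m n R) :
    {M : Matrix m m R | Mᵀ * M = 1 ∧ M * X = Q * X} =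
      (Q * ·) '' {N : Matrix m m R | Nᵀ * N = 1 ∧ N * X = X} := by
  have hQ' : Q * Qᵀ = 1 := mul_eq_one_comm.mp hQ
  ext M
  constructor
  · rintro ⟨hM, hMX⟩
    refine ⟨Qᵀ * M, ⟨?_, ?_⟩, ?_⟩
    · rw [transpose_mul, transpose_transpose, Matrix.mul_assoc, ← Matrix.mul_assoc Q, hQ',
        Matrix.one_mul, hM]
    · rw [Matrix.mul_assoc, hMX, ← Matrix.mul_assoc, hQ, Matrix.one_mul]
    · show Q * (Qᵀ * M) = M
      rw [← Matrix.mul_assoc, hQ', Matrix.one_mul]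
  · rintro ⟨N, ⟨hN, hNX⟩, rfl⟩
    exact ⟨by rw [transpose_mul, Matrix.mul_assoc, ← Matrix.mul_assoc Qᵀ, hQ, Matrix.one_mul, hN],
      by rw [Matrix.mul_assoc, hNX]⟩

theorem finrank_ker_vecMulLinear_add_rank [Fintype n] {K : Type*} [Field K] (X : Matrix m n K) :
    Module.finrank K (LinearMap.ker X.vecMulLinear) + X.rank = Fintype.card m := by
  rw [← rank_transpose, rank, mulVecLin_transpose, add_comm,
    LinearMap.finrank_range_add_finrank_ker, Module.finrank_fintype_fun_eq_card]

theorem exists_smul_dotProduct_smul_self_eq_one {v : m → ℝ} (hv : v ≠ 0) :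
    ∃ r : ℝ, r ≠ 0 ∧ (r • v) ⬝ᵥ (r • v) = 1 := by
  have hpos : 0 < v ⬝ᵥ v := by simpa using dotProduct_self_star_pos_iff.mpr hv
  refine ⟨(√(v ⬝ᵥ v))⁻¹, by positivity, ?_⟩
  rw [smul_dotProduct, dotProduct_smul, smul_eq_mul, smul_eq_mul, ← mul_assoc, ← mul_inv,
    Real.mul_self_sqrt hpos.le, inv_mul_cancel₀ hpos.ne']

theorem exists_unit_vector_forall_vecMul_eq_zero_iff [Fintype n] (X : Matrix m n ℝ)
    (hrank : X.rank + 1 = Fintype.card m) :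
    ∃ u : m → ℝ, u ⬝ᵥ u = 1 ∧ ∀ w, w ᵥ* X = 0 ↔ ∃ c : ℝ, w = c • u := by
  have hker : Module.finrank ℝ (LinearMap.ker X.vecMulLinear) = 1 := by
    have := finrank_ker_vecMulLinear_add_rank X
    omega
  obtain ⟨⟨v, hvX⟩, hv0, hspan⟩ := finrank_eq_one_iff'.mp hker
  rw [LinearMap.mem_ker, vecMulLinear_apply] at hvX
  have hv : v ≠ 0 := fun h => hv0 (Subtype.ext h)
  obtain ⟨r, hr, hu⟩ := exists_smul_dotProduct_smul_self_eq_one hv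
  refine ⟨r • v, hu, fun w => ⟨fun hw => ?_, ?_⟩⟩
  · obtain ⟨c, hc⟩ := hspan ⟨w, by rwa [LinearMap.mem_ker, vecMulLinear_apply]⟩
    refine ⟨c / r, ?_⟩
    rw [smul_smul, div_mul_cancel₀ c hr]
    exact (congrArg Subtype.val hc).symm
  · rintro ⟨c, rfl⟩
    rw [smul_vecMul, smul_vecMul, hvX, smul_zero, smul_zero]

end Matrix

/-- if rank X = n − 1 then 𝕄(X, M_T X) has exactly two elements,
one of which is M_T. -/
theorem rank_sub_one_two_solutions {n q : ℕ} (hn : 1 ≤ n)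
    (X : Matrix (Fin n) (Fin q) ℝ)
    (MT : Matrix (Fin n) (Fin n) ℝ) (hMT : MTᵀ * MT = 1)
    (hrank : X.rank = n - 1) :
    ∃ M' : Matrix (Fin n) (Fin n) ℝ, M' ≠ MT ∧
      {M : Matrix (Fin n) (Fin n) ℝ | Mᵀ * M = 1 ∧ M * X = MT * X} = {MT, M'} := by
  obtain ⟨u, hu, hker⟩ :=
    exists_unit_vector_forall_vecMul_eq_zero_iff X (by rw [hrank, Fintype.card_fin]; omega)
  refine ⟨MT * householder u, fun h => householder_ne_one hu ?_, ?_⟩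
  · simpa [← Matrix.mul_assoc, hMT] using congrArg (MTᵀ * ·) h
  · rw [setOf_orthogonal_mul_eq_mul_eq_image hMT, setOf_orthogonal_mul_eq_self_eq hu hker,
      Set.image_pair, Matrix.mul_one]
end
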